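/- Let B be a real n×n matrix (n ≥ 2) whose complex characteristic polynomial has simple roots iω and −iω for some real ω > 0, while all its other roots have real part < 0, and let ψ span the kernel of the Lie derivative L_B on real homogeneous degree-2 polynomials in ℝ[x₁,…,xₙ]. Let C be the (n+1)×(n+1) real block-diagonal matrix diag(0, B), acting on variables (x₀, x₁, …, xₙ). Then the kernel of the Lie derivative L_C restricted to homogeneous degree-3 polynomials in ℝ[x₀, x₁, …, xₙ] is two-dimensional and spanned by x₀³ and x₀·ψ (with ψ regarded as a polynomial in x₁,…,xₙ). -/

import Mathlib

open MvPolynomial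

/-- The Lie derivative of a polynomial `ψ` along the linear vector field `x ↦ Bx`. -/
noncomputable def lieDeriv {m : ℕ} (B : Matrix (Fin m) (Fin m) ℝ)
    (ψ : MvPolynomial (Fin m) ℝ) : MvPolynomial (Fin m) ℝ :=
  ∑ i, pderiv i ψ * ∑ j, C (B i j) * X j

/-!
`L_A` is a derivation, and on linear forms it acts as `v ↦ v ᵥ* A`. Over an algebraically closed
field every linear form is a sum of generalized eigenvectors of this action, and by the Leibniz
rule a product of generalized eigenvectors of a derivation is one for the sum of the eigenvalues.
So a homogeneous polynomial of degree `k` is a sum of generalized eigenvectors of `L_A` whose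
eigenvalues are sums of `k` eigenvalues of `A`; if no such sum vanishes, `L_A` is injective in
degree `k`. For `B`, all eigenvalues have real part `≤ 0` and those on the imaginary axis are
`±iω`, so no odd number of them sums to `0`: `L_B` is injective in degrees `1` and `3`.

Writing `φ = ∑ x₀ᵏ φₖ(x₁, …, xₙ)`, the operator `L_C` acts on each `φₖ` as `L_B`, because
`L_C x₀ = 0` and `C` does not mix `x₀` into the other variables. For `φ` of degree `3` in the
kernel this kills `φ₀` and `φ₂`, puts `φ₁` in `ℝ ψ`, and leaves the constant `φ₃`.
-/

open Module

namespace Derivation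

variable {K S : Type*} [CommRing K] [CommRing S] [Algebra K S] (D : Derivation K S S)

theorem sub_smul_one_apply_mul (a b : K) (x y : S) :
    ((D : End K S) - (a + b) • 1) (x * y) =
      ((D : End K S) - a • 1) x * y + x * ((D : End K S) - b • 1) y := by
  simp only [LinearMap.sub_apply, LinearMap.smul_apply, End.one_apply, coeFn_coe, leibniz,
    add_smul, LinearMap.add_apply, smul_eq_mul, mul_sub, sub_mul, mul_smul_comm, smul_mul_assoc]
  rw [mul_comm (D x) y]
  abel

theorem pow_sub_smul_one_apply_mul_eq_zero {a b : K} :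
    ∀ {p q : ℕ} {x y : S}, (((D : End K S) - a • 1) ^ p) x = 0 →
      (((D : End K S) - b • 1) ^ q) y = 0 →
      (((D : End K S) - (a + b) • 1) ^ (p + q)) (x * y) = 0
  | 0, _, x, _, hx, _ => by simp_all
  | _, 0, _, y, _, hy => by simp_all
  | p + 1, q + 1, x, y, hx, hy => by
    have hx' : (((D : End K S) - a • 1) ^ p) (((D : End K S) - a • 1) x) = 0 := by
      rwa [← End.mul_apply, ← pow_succ]
    have hy' : (((D : End K S) - b • 1) ^ q) (((D : End K S) - b • 1) y) = 0 := by
      rwa [← End.mul_apply, ← pow_succ]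
    rw [show p + 1 + (q + 1) = (p + (q + 1)) + 1 by ring, pow_succ, End.mul_apply,
      sub_smul_one_apply_mul, map_add, pow_sub_smul_one_apply_mul_eq_zero hx' hy,
      show p + (q + 1) = (p + 1) + q by ring, pow_sub_smul_one_apply_mul_eq_zero hx hy', add_zero]

theorem maxGenEigenspace_mul_le (a b : K) :
    End.maxGenEigenspace (D : End K S) a * End.maxGenEigenspace (D : End K S) b ≤
      End.maxGenEigenspace (D : End K S) (a + b) := by
  refine Submodule.mul_le.2 fun x hx y hy => ?_
  obtain ⟨p, hp⟩ := (End.mem_maxGenEigenspace _ _ _).1 hx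
  obtain ⟨q, hq⟩ := (End.mem_maxGenEigenspace _ _ _).1 hy
  exact (End.mem_maxGenEigenspace _ _ _).2 ⟨p + q, D.pow_sub_smul_one_apply_mul_eq_zero hp hq⟩

theorem pow_le_iSup_maxGenEigenspace_sum {M : Submodule K S} {Λ : Set K}
    (hM : M ≤ ⨆ c ∈ Λ, End.maxGenEigenspace (D : End K S) c) :
    ∀ k : ℕ, M ^ k ≤ ⨆ (μ : Fin k → K) (_ : ∀ i, μ i ∈ Λ),
      End.maxGenEigenspace (D : End K S) (∑ i, μ i)
  | 0 => by
    refine le_trans ?_ (le_iSup₂_of_le Fin.elim0 finZeroElim le_rfl)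
    simpa using ⟨1, by simp⟩
  | k + 1 => by
    rw [pow_succ]
    refine (mul_le_mul' (pow_le_iSup_maxGenEigenspace_sum hM k) hM).trans ?_
    simp only [Submodule.iSup_mul, Submodule.mul_iSup, iSup_le_iff]
    intro c hc μ hμ
    refine le_iSup₂_of_le (Fin.snoc μ c) (Fin.lastCases (by simpa using hc) (by simpa using hμ)) ?_
    simpa [Fin.sum_univ_castSucc] using D.maxGenEigenspace_mul_le _ _

theorem eq_zero_of_mem_pow_of_apply_eq_zero [IsDomain K] [IsTorsionFree K S]
    {M : Submodule K S} {Λ : Set K} (hM : M ≤ ⨆ c ∈ Λ, End.maxGenEigenspace (D : End K S) c)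
    {k : ℕ} (hΛ : ∀ μ : Fin k → K, (∀ i, μ i ∈ Λ) → ∑ i, μ i ≠ 0)
    {x : S} (hx : x ∈ M ^ k) (hDx : D x = 0) : x = 0 := by
  have hx₀ : x ∈ End.maxGenEigenspace (D : End K S) 0 :=
    (End.mem_maxGenEigenspace _ _ _).2 ⟨1, by simp [hDx]⟩
  have hx_ne : x ∈ ⨆ c ∈ {c : K | c ≠ 0}, End.maxGenEigenspace (D : End K S) c :=
    (D.pow_le_iSup_maxGenEigenspace_sum hM k).trans
      (iSup₂_le fun μ hμ => le_iSup₂_of_le (∑ i, μ i) (hΛ μ hμ) le_rfl) hx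
  have := (End.independent_maxGenEigenspace (D : End K S)).disjoint_biSup
    (show (0 : K) ∉ {c : K | c ≠ 0} by simp)
  simpa using this.le_bot ⟨hx₀, hx_ne⟩

end Derivation

theorem Module.End.map_maxGenEigenspace_le_of_comp_eq {R M N : Type*} [CommRing R]
    [AddCommGroup M] [Module R M] [AddCommGroup N] [Module R N] {f : End R M} {f' : End R N}
    {g : M →ₗ[R] N} (h : f' ∘ₗ g = g ∘ₗ f) (c : R) :
    (f.maxGenEigenspace c).map g ≤ f'.maxGenEigenspace c := by
  rintro _ ⟨v, hv, rfl⟩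
  obtain ⟨k, hk⟩ := (End.mem_maxGenEigenspace _ _ _).1 hv
  have h' : (f' - c • 1) ∘ₗ g = g ∘ₗ (f - c • 1) := by
    rw [LinearMap.sub_comp, LinearMap.comp_sub, h, LinearMap.smul_comp, LinearMap.comp_smul]
    rfl
  refine (End.mem_maxGenEigenspace _ _ _).2 ⟨k, ?_⟩
  rw [← LinearMap.comp_apply, End.commute_pow_left_of_commute h' k, LinearMap.comp_apply,
    hk, map_zero]

theorem Module.End.maxGenEigenspace_eq_bot_of_not_hasEigenvalue {R M : Type*} [CommRing R]
    [AddCommGroup M] [Module R M] {f : End R M} {c : R} (h : ¬ f.HasEigenvalue c) :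
    f.maxGenEigenspace c = ⊥ := by
  by_contra h'
  exact h ((End.hasUnifEigenvalue_iff_hasUnifEigenvalue_one (by simp)).1 h')

theorem Matrix.hasEigenvalue_vecMulLinear_iff {K ι : Type*} [Field K] [Fintype ι] [DecidableEq ι]
    (A : Matrix ι ι K) (c : K) : End.HasEigenvalue A.vecMulLinear c ↔ A.charpoly.IsRoot c := by
  rw [← Matrix.mulVecLin_transpose, ← Matrix.toLin'_apply', End.hasEigenvalue_iff_isRoot_charpoly,
    Matrix.charpoly_toLin', Matrix.charpoly_transpose]

namespace MvPolynomial

variable {R : Type*} [CommRing R] {m : ℕ}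

noncomputable def lieDerivation (A : Matrix (Fin m) (Fin m) R) :
    Derivation R (MvPolynomial (Fin m) R) (MvPolynomial (Fin m) R) :=
  ∑ i, (∑ j, C (A i j) * X j) • pderiv i

theorem lieDerivation_apply (A : Matrix (Fin m) (Fin m) R) (ψ : MvPolynomial (Fin m) R) :
    lieDerivation A ψ = ∑ i, pderiv i ψ * ∑ j, C (A i j) * X j := by
  rw [lieDerivation, ← Derivation.coeFnAddMonoidHom_apply, map_sum, Finset.sum_apply]
  simp [Derivation.smul_apply, mul_comm]

theorem lieDeriv_eq_lieDerivation (B : Matrix (Fin m) (Fin m) ℝ) (ψ : MvPolynomial (Fin m) ℝ) :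
    lieDeriv B ψ = lieDerivation B ψ :=
  (lieDerivation_apply B ψ).symm

theorem lieDerivation_X (A : Matrix (Fin m) (Fin m) R) (i : Fin m) :
    lieDerivation A (X i) = Fintype.linearCombination R X (A i) := by
  simp [lieDerivation_apply, pderiv_X, Pi.single_apply, Fintype.linearCombination_apply,
    smul_eq_C_mul]

theorem lieDerivation_comp_linearCombination (A : Matrix (Fin m) (Fin m) R) :
    (lieDerivation A : End R (MvPolynomial (Fin m) R)) ∘ₗ Fintype.linearCombination R X =
      Fintype.linearCombination R X ∘ₗ A.vecMulLinear := by
  ext i : 2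
  simp [lieDerivation_X, Matrix.row]

theorem map_lieDerivation {S : Type*} [CommRing S] (f : R →+* S) (A : Matrix (Fin m) (Fin m) R)
    (ψ : MvPolynomial (Fin m) R) :
    map f (lieDerivation A ψ) = lieDerivation (A.map f) (map f ψ) := by
  simp [lieDerivation_apply, pderiv_map]

theorem homogeneousSubmodule_one_le_iSup_maxGenEigenspace {K : Type*} [Field K] [IsAlgClosed K]
    (A : Matrix (Fin m) (Fin m) K) :
    homogeneousSubmodule (Fin m) K 1 ≤ ⨆ c ∈ {c | A.charpoly.IsRoot c},
      End.maxGenEigenspace (lieDerivation A : End K (MvPolynomial (Fin m) K)) c := by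
  rw [homogeneousSubmodule_one_eq_span_X,
    ← Fintype.range_linearCombination K (X : Fin m → MvPolynomial (Fin m) K), LinearMap.range_eq_map,
    ← End.iSup_maxGenEigenspace_eq_top A.vecMulLinear, Submodule.map_iSup]
  refine iSup_le fun c => ?_
  by_cases hc : A.charpoly.IsRoot c
  · exact le_iSup₂_of_le c hc
      (End.map_maxGenEigenspace_le_of_comp_eq (lieDerivation_comp_linearCombination A) c)
  · rw [End.maxGenEigenspace_eq_bot_of_not_hasEigenvalue
      (mt (A.hasEigenvalue_vecMulLinear_iff c).1 hc), Submodule.map_bot]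
    exact bot_le

theorem eq_zero_of_isHomogeneous_of_lieDerivation_eq_zero_of_isAlgClosed {K : Type*} [Field K]
    [IsAlgClosed K] (A : Matrix (Fin m) (Fin m) K) {k : ℕ}
    (hA : ∀ μ : Fin k → K, (∀ i, A.charpoly.IsRoot (μ i)) → ∑ i, μ i ≠ 0)
    {φ : MvPolynomial (Fin m) K} (hφ : φ.IsHomogeneous k) (h : lieDerivation A φ = 0) : φ = 0 :=
  (lieDerivation A).eq_zero_of_mem_pow_of_apply_eq_zero
    (homogeneousSubmodule_one_le_iSup_maxGenEigenspace A) hA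
    (by rwa [homogeneousSubmodule_one_pow, mem_homogeneousSubmodule]) h

theorem eq_zero_of_isHomogeneous_of_lieDerivation_eq_zero {K L : Type*} [Field K]
    [Field L] [IsAlgClosed L] [Algebra K L] (A : Matrix (Fin m) (Fin m) K) {k : ℕ}
    (hA : ∀ μ : Fin k → L, (∀ i, (A.charpoly.map (algebraMap K L)).IsRoot (μ i)) → ∑ i, μ i ≠ 0)
    {φ : MvPolynomial (Fin m) K} (hφ : φ.IsHomogeneous k) (h : lieDerivation A φ = 0) : φ = 0 := by
  refine map_injective _ (algebraMap K L).injective ?_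
  rw [map_zero]
  refine eq_zero_of_isHomogeneous_of_lieDerivation_eq_zero_of_isAlgClosed (A.map (algebraMap K L))
    (by simpa [Matrix.charpoly_map] using hA) (hφ.map _) ?_
  rw [← map_lieDerivation, h, map_zero]

section Extension

variable {n : ℕ}

theorem lieDerivation_X_zero {Cm : Matrix (Fin (n + 1)) (Fin (n + 1)) R}
    (hC0 : ∀ j, Cm 0 j = 0) : lieDerivation Cm (X 0) = 0 := by
  simp [lieDerivation_X, Fintype.linearCombination_apply, hC0]

theorem lieDerivation_rename_succ {B : Matrix (Fin n) (Fin n) R}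
    {Cm : Matrix (Fin (n + 1)) (Fin (n + 1)) R} (hC0' : ∀ i, Cm i 0 = 0)
    (hCB : ∀ i j : Fin n, Cm i.succ j.succ = B i j) (p : MvPolynomial (Fin n) R) :
    lieDerivation Cm (rename Fin.succ p) = rename Fin.succ (lieDerivation B p) := by
  have h0 : pderiv 0 (rename Fin.succ p) = 0 :=
    pderiv_eq_zero_of_notMem_vars fun h => by
      obtain ⟨j, -, hj⟩ := mem_vars_rename _ _ h
      exact Fin.succ_ne_zero j hj
  simp [lieDerivation_apply, Fin.sum_univ_succ, h0, pderiv_rename (Fin.succ_injective n), hC0',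
    hCB]

theorem finSuccEquiv_rename_succ (p : MvPolynomial (Fin n) R) :
    finSuccEquiv R n (rename Fin.succ p) = Polynomial.C p := by
  have h : (finSuccEquiv R n).toAlgHom.comp (rename Fin.succ) = Polynomial.CAlgHom :=
    algHom_ext fun i => by simp [finSuccEquiv_X_succ, Polynomial.CAlgHom]
  exact DFunLike.congr_fun h p

theorem finSuccEquiv_X_zero_pow_mul_rename_succ (k : ℕ) (p : MvPolynomial (Fin n) R) :
    finSuccEquiv R n (X 0 ^ k * rename Fin.succ p) = Polynomial.monomial k p := by
  rw [map_mul, map_pow, finSuccEquiv_X_zero, finSuccEquiv_rename_succ,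
    ← Polynomial.C_mul_X_pow_eq_monomial, mul_comm]

theorem lieDerivation_X_zero_pow_mul_rename_succ {B : Matrix (Fin n) (Fin n) R}
    {Cm : Matrix (Fin (n + 1)) (Fin (n + 1)) R} (hC0 : ∀ j, Cm 0 j = 0) (hC0' : ∀ i, Cm i 0 = 0)
    (hCB : ∀ i j : Fin n, Cm i.succ j.succ = B i j) (k : ℕ) (p : MvPolynomial (Fin n) R) :
    lieDerivation Cm (X 0 ^ k * rename Fin.succ p) =
      X 0 ^ k * rename Fin.succ (lieDerivation B p) := by
  simp [Derivation.leibniz_pow, lieDerivation_X_zero hC0, lieDerivation_rename_succ hC0' hCB]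

theorem eq_sum_range_X_zero_pow_mul_rename_succ {φ : MvPolynomial (Fin (n + 1)) R} {N : ℕ}
    (hN : (finSuccEquiv R n φ).natDegree < N) :
    φ = ∑ k ∈ Finset.range N, X 0 ^ k * rename Fin.succ ((finSuccEquiv R n φ).coeff k) := by
  apply (finSuccEquiv R n).injective
  simp only [map_sum, finSuccEquiv_X_zero_pow_mul_rename_succ]
  exact (finSuccEquiv R n φ).as_sum_range' N hN

theorem IsHomogeneous.natDegree_finSuccEquiv_le {φ : MvPolynomial (Fin (n + 1)) R} {d : ℕ}
    (hφ : φ.IsHomogeneous d) : (finSuccEquiv R n φ).natDegree ≤ d := by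
  rw [natDegree_finSuccEquiv]
  exact (degreeOf_le_totalDegree φ 0).trans hφ.totalDegree_le

theorem coeff_finSuccEquiv_lieDerivation {B : Matrix (Fin n) (Fin n) R}
    {Cm : Matrix (Fin (n + 1)) (Fin (n + 1)) R} (hC0 : ∀ j, Cm 0 j = 0) (hC0' : ∀ i, Cm i 0 = 0)
    (hCB : ∀ i j : Fin n, Cm i.succ j.succ = B i j) (φ : MvPolynomial (Fin (n + 1)) R) (k : ℕ) :
    (finSuccEquiv R n (lieDerivation Cm φ)).coeff k =
      lieDerivation B ((finSuccEquiv R n φ).coeff k) := by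
  conv_lhs =>
    rw [eq_sum_range_X_zero_pow_mul_rename_succ (φ := φ) (Nat.lt_succ_self _), map_sum]
  simp only [lieDerivation_X_zero_pow_mul_rename_succ hC0 hC0' hCB, map_sum,
    finSuccEquiv_X_zero_pow_mul_rename_succ, Polynomial.finsetSum_coeff, Polynomial.coeff_monomial,
    Finset.sum_ite_eq', Finset.mem_range]
  split_ifs with hk
  · rfl
  · rw [Polynomial.coeff_eq_zero_of_natDegree_lt (by omega), map_zero]

theorem exists_eq_smul_X_zero_pow_three_add_smul_of_lieDerivation_eq_zero
    {B : Matrix (Fin n) (Fin n) R} {Cm : Matrix (Fin (n + 1)) (Fin (n + 1)) R}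
    (hC0 : ∀ j, Cm 0 j = 0) (hC0' : ∀ i, Cm i 0 = 0)
    (hCB : ∀ i j : Fin n, Cm i.succ j.succ = B i j)
    (hB₁ : ∀ φ : MvPolynomial (Fin n) R, φ.IsHomogeneous 1 → lieDerivation B φ = 0 → φ = 0)
    (hB₃ : ∀ φ : MvPolynomial (Fin n) R, φ.IsHomogeneous 3 → lieDerivation B φ = 0 → φ = 0)
    {ψ : MvPolynomial (Fin n) R}
    (hψ : ∀ φ : MvPolynomial (Fin n) R, φ.IsHomogeneous 2 → lieDerivation B φ = 0 →
      ∃ c : R, φ = c • ψ)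
    {φ : MvPolynomial (Fin (n + 1)) R} (hφ : φ.IsHomogeneous 3)
    (hφCm : lieDerivation Cm φ = 0) :
    ∃ a b : R,
      φ = a • (X 0 ^ 3 : MvPolynomial (Fin (n + 1)) R) + b • (X 0 * rename Fin.succ ψ) := by
  have hker : ∀ k, lieDerivation B ((finSuccEquiv R n φ).coeff k) = 0 := fun k => by
    rw [← coeff_finSuccEquiv_lieDerivation hC0 hC0' hCB, hφCm, map_zero, Polynomial.coeff_zero]
  have hhom := hφ.finSuccEquiv_coeff_isHomogeneous
  have h₀ := hB₃ _ (hhom 0 3 rfl) (hker 0)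
  have h₂ := hB₁ _ (hhom 2 1 rfl) (hker 2)
  obtain ⟨b, h₁⟩ := hψ _ (hhom 1 2 rfl) (hker 1)
  obtain ⟨a, h₃⟩ : ∃ a, (finSuccEquiv R n φ).coeff 3 = C a :=
    ⟨_, totalDegree_eq_zero_iff_eq_C.1 ((totalDegree_zero_iff_isHomogeneous _).2 (hhom 3 0 rfl))⟩
  refine ⟨a, b, ?_⟩
  rw [eq_sum_range_X_zero_pow_mul_rename_succ (hφ.natDegree_finSuccEquiv_le.trans_lt
    (by norm_num : 3 < 4))]
  simp [Finset.sum_range_succ, h₀, h₁, h₂, h₃, smul_eq_C_mul]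
  ring

theorem linearIndependent_X_zero_pow_mul_rename_succ {K : Type*} [Field K] {i j : ℕ} (hij : i ≠ j)
    {p q : MvPolynomial (Fin n) K} (hp : p ≠ 0) (hq : q ≠ 0) :
    LinearIndependent K ![X 0 ^ i * rename Fin.succ p, X 0 ^ j * rename Fin.succ q] := by
  rw [LinearIndependent.pair_iff]
  intro s t h
  have h' := congrArg (finSuccEquiv K n) h
  simp only [map_add, map_smul, finSuccEquiv_X_zero_pow_mul_rename_succ, map_zero] at h'
  have hi := congrArg (Polynomial.coeff · i) h'
  have hj := congrArg (Polynomial.coeff · j) h'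
  simp [Polynomial.coeff_monomial, hij, hij.symm, hp, hq] at hi hj
  exact ⟨hi, hj⟩

end Extension

end MvPolynomial

theorem Complex.re_neg_or_eq_of_isRoot {N : ℕ} {ω : ℝ} {μ : Fin N → ℂ} (hμ : ∀ i, (μ i).re < 0)
    {z : ℂ} (hz : ((Polynomial.X - Polynomial.C (Complex.I * ω)) *
      (Polynomial.X - Polynomial.C (-(Complex.I * ω))) *
      ∏ i, (Polynomial.X - Polynomial.C (μ i))).IsRoot z) :
    z.re < 0 ∨ z = Complex.I * ω ∨ z = -(Complex.I * ω) := by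
  simp only [Polynomial.IsRoot, Polynomial.eval_mul, Polynomial.eval_sub, Polynomial.eval_X,
    Polynomial.eval_C, Polynomial.eval_prod, mul_eq_zero, Finset.prod_eq_zero_iff, sub_eq_zero,
    Finset.mem_univ, true_and] at hz
  rcases hz with (h | h) | ⟨i, rfl⟩
  · exact .inr (.inl h)
  · exact .inr (.inr h)
  · exact .inl (hμ i)

theorem Complex.sum_ne_zero_of_odd {ω : ℝ} (hω : ω ≠ 0) {k : ℕ} (hk : Odd k) (z : Fin k → ℂ)
    (hz : ∀ i, (z i).re < 0 ∨ z i = I * ω ∨ z i = -(I * ω)) : ∑ i, z i ≠ 0 := by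
  intro hsum
  have hre : ∀ i, (z i).re = 0 := by
    have hle : ∀ i ∈ Finset.univ, (z i).re ≤ 0 := fun i _ => by
      rcases hz i with h | h | h
      · exact h.le
      · simp [h]
      · simp [h]
    refine fun i => (Finset.sum_eq_zero_iff_of_nonpos hle).1 ?_ i (Finset.mem_univ i)
    simpa using congrArg re hsum
  have hsign : ∀ i, ∃ ε : ℤ, (ε : ZMod 2) = 1 ∧ z i = ε * (I * ω) := fun i => by
    rcases hz i with h | h | h
    · exact absurd (hre i) h.ne
    · exact ⟨1, by simp, by simp [h]⟩
    · exact ⟨-1, by decide, by simp [h]⟩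
  choose ε hε_odd hε using hsign
  -- Read mod 2: every `ε i = ±1` is odd, so `∑ ε` has the parity of `k`.
  have hε_sum : ∑ i, ε i = 0 := by
    have hIω : I * (ω : ℂ) ≠ 0 := by simp [hω]
    have : ((∑ i, ε i : ℤ) : ℂ) * (I * ω) = 0 := by
      rw [Int.cast_sum, Finset.sum_mul, ← hsum]
      exact Finset.sum_congr rfl fun i _ => (hε i).symm
    exact_mod_cast (mul_eq_zero.1 this).resolve_right hIω
  have : ((k : ℕ) : ZMod 2) = 0 := by
    simpa [hε_odd] using congrArg (fun s : ℤ => (s : ZMod 2)) hε_sum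
  exact Nat.not_even_iff_odd.2 hk ((ZMod.natCast_eq_zero_iff_even).1 this)

theorem kernel_lieDeriv_extended_degree_three_general {n : ℕ}
    (B : Matrix (Fin n) (Fin n) ℝ) (ω : ℝ) (hω : 0 < ω) (μ : Fin (n - 2) → ℂ)
    (hμ : ∀ i, (μ i).re < 0)
    (hchar : B.charpoly.map (algebraMap ℝ ℂ) =
      (Polynomial.X - Polynomial.C (Complex.I * ω)) *
      (Polynomial.X - Polynomial.C (-(Complex.I * ω))) *
      ∏ i, (Polynomial.X - Polynomial.C (μ i)))
    (ψ : MvPolynomial (Fin n) ℝ) (hψne : ψ ≠ 0)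
    (hψker : lieDeriv B ψ = 0)
    (hψspan : ∀ φ : MvPolynomial (Fin n) ℝ, φ.IsHomogeneous 2 → lieDeriv B φ = 0 →
      ∃ c : ℝ, φ = c • ψ)
    (Cm : Matrix (Fin (n + 1)) (Fin (n + 1)) ℝ)
    (hC0 : ∀ j, Cm 0 j = 0) (hC0' : ∀ i, Cm i 0 = 0)
    (hCB : ∀ i j : Fin n, Cm i.succ j.succ = B i j) :
    lieDeriv Cm (X 0 ^ 3) = 0 ∧
    lieDeriv Cm (X 0 * rename Fin.succ ψ) = 0 ∧
    (∀ a b : ℝ, a • (X 0 ^ 3 : MvPolynomial (Fin (n + 1)) ℝ)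
        + b • (X 0 * rename Fin.succ ψ) = 0 → a = 0 ∧ b = 0) ∧
    (∀ φ : MvPolynomial (Fin (n + 1)) ℝ, φ.IsHomogeneous 3 → lieDeriv Cm φ = 0 →
      ∃ a b : ℝ, φ = a • (X 0 ^ 3 : MvPolynomial (Fin (n + 1)) ℝ)
        + b • (X 0 * rename Fin.succ ψ)) := by
  simp only [lieDeriv_eq_lieDerivation] at *
  have hodd : ∀ k, Odd k → ∀ z : Fin k → ℂ,
      (∀ i, (B.charpoly.map (algebraMap ℝ ℂ)).IsRoot (z i)) → ∑ i, z i ≠ 0 :=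
    fun k hk z hz => Complex.sum_ne_zero_of_odd hω.ne' hk z fun i =>
      Complex.re_neg_or_eq_of_isRoot hμ (hchar ▸ hz i)
  refine ⟨?_, ?_, ?_, fun φ hφ hφCm => ?_⟩
  · simp [Derivation.leibniz_pow, lieDerivation_X_zero hC0]
  · simp [lieDerivation_X_zero hC0, lieDerivation_rename_succ hC0' hCB, hψker]
  · simpa using LinearIndependent.pair_iff.1
      (linearIndependent_X_zero_pow_mul_rename_succ (K := ℝ) (i := 3) (j := 1) (by norm_num)
        one_ne_zero hψne)
  · exact exists_eq_smul_X_zero_pow_three_add_smul_of_lieDerivation_eq_zero hC0 hC0' hCB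
      (fun φ hφ => eq_zero_of_isHomogeneous_of_lieDerivation_eq_zero B
        (hodd 1 odd_one) hφ)
      (fun φ hφ => eq_zero_of_isHomogeneous_of_lieDerivation_eq_zero B
        (hodd 3 (by decide)) hφ) hψspan hφ hφCm

/-- Let `B` be a real `n×n` matrix (`n ≥ 2`) whose complex characteristic polynomial has simple
roots `iω, −iω` (`ω > 0`), all other roots having real part `< 0`, and let `ψ` span the kernel
of `L_B` on homogeneous degree-2 polynomials. Let `Cm = diag(0, B)` act on the variables
`x₀, x₁, …, xₙ`. Then the kernel of `L_{Cm}` on homogeneous degree-3 polynomials in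
`x₀, …, xₙ` is two-dimensional, spanned by `x₀³` and `x₀·ψ`. -/
theorem kernel_lieDeriv_extended_degree_three {n : ℕ} (hn : 2 ≤ n)
    (B : Matrix (Fin n) (Fin n) ℝ) (ω : ℝ) (hω : 0 < ω) (μ : Fin (n - 2) → ℂ)
    (hμ : ∀ i, (μ i).re < 0)
    (hchar : B.charpoly.map (algebraMap ℝ ℂ) =
      (Polynomial.X - Polynomial.C (Complex.I * ω)) *
      (Polynomial.X - Polynomial.C (-(Complex.I * ω))) *
      ∏ i, (Polynomial.X - Polynomial.C (μ i)))
    (ψ : MvPolynomial (Fin n) ℝ) (hψhom : ψ.IsHomogeneous 2) (hψne : ψ ≠ 0)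
    (hψker : lieDeriv B ψ = 0)
    (hψspan : ∀ φ : MvPolynomial (Fin n) ℝ, φ.IsHomogeneous 2 → lieDeriv B φ = 0 →
      ∃ c : ℝ, φ = c • ψ)
    (Cm : Matrix (Fin (n + 1)) (Fin (n + 1)) ℝ)
    (hC0 : ∀ j, Cm 0 j = 0) (hC0' : ∀ i, Cm i 0 = 0)
    (hCB : ∀ i j : Fin n, Cm i.succ j.succ = B i j) :
    lieDeriv Cm (X 0 ^ 3) = 0 ∧
    lieDeriv Cm (X 0 * rename Fin.succ ψ) = 0 ∧
    (∀ a b : ℝ, a • (X 0 ^ 3 : MvPolynomial (Fin (n + 1)) ℝ)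
        + b • (X 0 * rename Fin.succ ψ) = 0 → a = 0 ∧ b = 0) ∧
    (∀ φ : MvPolynomial (Fin (n + 1)) ℝ, φ.IsHomogeneous 3 → lieDeriv Cm φ = 0 →
      ∃ a b : ℝ, φ = a • (X 0 ^ 3 : MvPolynomial (Fin (n + 1)) ℝ)
        + b • (X 0 * rename Fin.succ ψ)) :=
  kernel_lieDeriv_extended_degree_three_general B ω hω μ hμ hchar ψ hψne hψker hψspan Cm hC0 hC0'
    hCB
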